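/- arXiv:1511.06237 — 3 statements merged into one kernel-verified Lean document; each statement's English description precedes it below -/
import Mathlib

section
/- For every z ∈ ℂ one has Φ(z) = −Im((a/2)z²) + (Im(bz))² / (2 Im c). In particular Φ is a real-valued quadratic form on ℂ ≅ ℝ², and Φ is strictly plurisubharmonic: its Laplacian is the positive constant ΔΦ = |b|²/Im c > 0. -/
/-!
For real `x` the function `x ↦ -Im φ(z,x)` is a concave quadratic polynomial with leading
coefficient `-Im c / 2`; completing the square gives its supremum, which is the stated formula.
That formula is the diagonal `B(z,z)` of a real bilinear form `B` on `ℂ`, and the Laplacian of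
`z ↦ B(z,z)` is `2 (B(1,1) + B(i,i))`. In this trace the holomorphic part `-Im(a z² / 2)` cancels
(as `i² = -1`), while `(Im(bz))²` contributes `(Im b)² + (Re b)² = |b|²`.
-/

open Laplacian

theorem iSup_neg_quadratic (k m t : ℝ) (ht : 0 < t) :
    ⨆ x : ℝ, -(k + m * x + t / 2 * x ^ 2) = -k + m ^ 2 / (2 * t) := by
  have gap (x : ℝ) : -k + m ^ 2 / (2 * t) - -(k + m * x + t / 2 * x ^ 2)
      = (m + t * x) ^ 2 / (2 * t) := by
    field_simp
    ring
  have le_max (x : ℝ) : -(k + m * x + t / 2 * x ^ 2) ≤ -k + m ^ 2 / (2 * t) := by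
    have := gap x
    have : 0 ≤ (m + t * x) ^ 2 / (2 * t) := by positivity
    linarith
  refine le_antisymm (ciSup_le le_max)
    (le_ciSup_of_le ⟨_, Set.forall_mem_range.2 le_max⟩ (-m / t) ?_)
  have := gap (-m / t)
  rw [show m + t * (-m / t) = 0 by field_simp; ring, zero_pow two_ne_zero, zero_div] at this
  linarith

theorem im_quadratic_ofReal (a b c z : ℂ) (x : ℝ) :
    (a / 2 * z ^ 2 + b * z * x + c / 2 * x ^ 2).im
      = (a / 2 * z ^ 2).im + (b * z).im * x + c.im / 2 * x ^ 2 := by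
  simp [Complex.mul_im, ← Complex.ofReal_pow]

section Bilinear

variable {𝕜 E F : Type*} [NontriviallyNormedField 𝕜] [NormedAddCommGroup E] [NormedSpace 𝕜 E]
  [NormedAddCommGroup F] [NormedSpace 𝕜 F]

theorem hasFDerivAt_bilinear_diag (B : E →L[𝕜] E →L[𝕜] F) (x : E) :
    HasFDerivAt (fun y => B y y) (B x + B.flip x) x := by
  refine (B.hasFDerivAt_of_bilinear (hasFDerivAt_id x) (hasFDerivAt_id x)).congr_fderiv ?_
  ext v
  simp

theorem iteratedFDeriv_two_bilinear_diag (B : E →L[𝕜] E →L[𝕜] F) (x v w : E) :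
    iteratedFDeriv 𝕜 2 (fun y => B y y) x ![v, w] = B v w + B w v := by
  have hderiv : fderiv 𝕜 (fun y => B y y) = ⇑(B + B.flip) :=
    funext fun y => (hasFDerivAt_bilinear_diag B y).fderiv
  rw [iteratedFDeriv_two_apply, hderiv, (B + B.flip).fderiv]
  simp

end Bilinear

theorem laplacian_bilinear_diag_complexPlane {F : Type*} [NormedAddCommGroup F]
    [NormedSpace ℝ F] (B : ℂ →L[ℝ] ℂ →L[ℝ] F) (z : ℂ) :
    Δ (fun y => B y y) z = (2 : ℝ) • (B 1 1 + B Complex.I Complex.I) := by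
  rw [InnerProductSpace.laplacian_eq_iteratedFDeriv_complexPlane]
  dsimp only
  rw [iteratedFDeriv_two_bilinear_diag, iteratedFDeriv_two_bilinear_diag, two_smul]
  abel

noncomputable def fbiWeightBilin (a b c : ℂ) : ℂ →L[ℝ] ℂ →L[ℝ] ℝ :=
  IsBilinearMap.toContinuousBilinearMap
    (f := fun u v : ℂ => -(a / 2 * u * v).im + (b * u).im * (b * v).im / (2 * c.im))
    (by constructor <;> intros <;> simp [mul_add, add_mul, Complex.mul_im] <;> ring)

/-- For the phase `φ(z,x) = (a/2)z² + bzx + (c/2)x²` with `Im c > 0`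
and `b ≠ 0`, the weight `Φ(z) = sup_{x∈ℝ}(−Im φ(z,x))` is given explicitly by
`Φ(z) = −Im((a/2)z²) + (Im(bz))²/(2 Im c)`; in particular `Φ` is a real quadratic form
on `ℂ ≅ ℝ²` which is strictly plurisubharmonic: its Laplacian (computed as the sum of
the second derivatives in the directions `1` and `i`) is the positive constant
`|b|²/Im c`. -/
theorem fbi_weight_strictly_plurisubharmonic
    (a b c : ℂ) (hc : 0 < c.im) (hb : b ≠ 0)
    (φ : ℂ → ℂ → ℂ)
    (hφ : ∀ z x : ℂ, φ z x = a / 2 * z ^ 2 + b * z * x + c / 2 * x ^ 2)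
    (Φ : ℂ → ℝ) (hΦ : ∀ z : ℂ, Φ z = ⨆ x : ℝ, -(φ z (x : ℂ)).im) :
    (∀ z : ℂ, Φ z = -(a / 2 * z ^ 2).im + ((b * z).im) ^ 2 / (2 * c.im)) ∧
    (∀ z : ℂ,
      iteratedFDeriv ℝ 2 Φ z ![1, 1] + iteratedFDeriv ℝ 2 Φ z ![Complex.I, Complex.I]
        = ‖b‖ ^ 2 / c.im) ∧
    0 < ‖b‖ ^ 2 / c.im := by
  have hΦ_eq (z : ℂ) : Φ z = -(a / 2 * z ^ 2).im + ((b * z).im) ^ 2 / (2 * c.im) := by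
    simp_rw [hΦ, hφ, im_quadratic_ofReal]
    exact iSup_neg_quadratic _ _ _ hc
  have hΦ_diag : Φ = fun z => fbiWeightBilin a b c z z := by
    ext z
    simp [hΦ_eq, fbiWeightBilin, sq, mul_assoc]
  refine ⟨hΦ_eq, fun z => ?_, by positivity⟩
  rw [← congrFun (InnerProductSpace.laplacian_eq_iteratedFDeriv_complexPlane Φ) z, hΦ_diag,
    laplacian_bilinear_diag_complexPlane]
  simp only [fbiWeightBilin, IsBilinearMap.toContinuousBilinearMap_apply, Complex.mul_im,
    Complex.mul_re, Complex.div_ofNat_re, Complex.div_ofNat_im, Complex.one_re, Complex.one_im,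
    Complex.I_re, Complex.I_im, smul_eq_mul, Complex.sq_norm, Complex.normSq_apply]
  field_simp
  ring
end

section
/- The Grushin operator 𝒮 is a bijection of H × ℂ, and its inverse sends (v, v₊) ∈ H × ℂ to (u, u₋) where u = v₊ e_k + Σ_{l≠k} (λ_l − z)^{−1} ⟨e_l, v⟩ e_l (the series converging in H) and u₋ = ⟨e_k, v⟩ + (z − λ_k) v₊. In particular the effective Hamiltonian, i.e. the lower-right entry of the inverse, is E₋₊(z) = z − λ_k. -/
/-!
In the coordinates `⟪e l, ·⟫` the Grushin operator decouples: the first component of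
`𝒮 (u, u₋)` has coordinates `(λ_l - z) ⟪e l, u⟫` for `l ≠ k`, which are invertible because
`λ_l ≠ z`, while at `l = k` the pair `(⟪e k, u⟫, u₋)` is moved by the invertible matrix
`[[λ_k - z, 1], [1, 0]]`. The gap bounds the multipliers `(λ_l - z)⁻¹` by `δ⁻¹`, so Bessel's
inequality makes the series for the inverse converge.
-/

open scoped InnerProductSpace

section Orthonormal

variable {𝕜 E ι : Type*} [RCLike 𝕜] [NormedAddCommGroup E] [InnerProductSpace 𝕜 E]

theorem inner_eq_zero_of_hasSum {f : ι → E} {s y : E} (h : HasSum f s)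
    (hf : ∀ i, ⟪y, f i⟫_𝕜 = 0) : ⟪y, s⟫_𝕜 = 0 :=
  (h.mapL (innerSL 𝕜 y)).unique (by simp [hf])

variable {e : ι → E}

theorem Orthonormal.inner_eq_of_hasSum_smul (he : Orthonormal 𝕜 e) {a : ι → 𝕜} {s : E}
    (h : HasSum (fun i => a i • e i) s) (j : ι) : ⟪e j, s⟫_𝕜 = a j := by
  classical
  have hj := h.mapL (innerSL 𝕜 (e j))
  simp only [innerSL_apply_apply, inner_smul_right, orthonormal_iff_ite.mp he, mul_ite,
    mul_one, mul_zero] at hj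
  rw [hj.unique (hasSum_single j fun i hi => if_neg (Ne.symm hi)), if_pos rfl]

theorem Orthonormal.summable_mul_inner_smul [CompleteSpace E] (he : Orthonormal 𝕜 e)
    {c : ι → 𝕜} {C : ℝ} (hc : ∀ i, ‖c i‖ ≤ C) (x : E) :
    Summable fun i => (c i * ⟪e i, x⟫_𝕜) • e i := by
  have hsq : Summable fun i => ‖c i * ⟪e i, x⟫_𝕜‖ ^ 2 := by
    refine ((he.inner_products_summable x).mul_left (C ^ 2)).of_nonneg_of_le
      (fun _ => by positivity) fun i => ?_
    rw [norm_mul, mul_pow]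
    gcongr
    exact hc i
  exact (he.orthogonalFamily.summable_iff_norm_sq_summable _).2 hsq

end Orthonormal

namespace HilbertBasis

variable {𝕜 E ι : Type*} [RCLike 𝕜] [NormedAddCommGroup E] [InnerProductSpace 𝕜 E]
  (e : HilbertBasis ι 𝕜 E)

theorem ext_inner_left {x y : E} (h : ∀ i, ⟪e i, x⟫_𝕜 = ⟪e i, y⟫_𝕜) : x = y :=
  e.repr.injective <| lp.ext <| funext fun i => by simpa only [e.repr_apply_apply] using h i

theorem inner_apply_of_apply_eq_smul {S : E →L[𝕜] E} {lam : ι → 𝕜}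
    (hS : ∀ i, S (e i) = lam i • e i) (x : E) (j : ι) :
    ⟪e j, S x⟫_𝕜 = lam j * ⟪e j, x⟫_𝕜 := by
  have h := (e.hasSum_repr x).mapL S
  simp only [map_smul, hS, smul_smul] at h
  rw [e.orthonormal.inner_eq_of_hasSum_smul (a := fun i => e.repr x i * lam i) h,
    e.repr_apply_apply, mul_comm]

end HilbertBasis

def grushinOperator {𝕜 E : Type*} [RCLike 𝕜] [NormedAddCommGroup E] [InnerProductSpace 𝕜 E]
    (S : E →L[𝕜] E) (z : 𝕜) (w : E) (p : E × 𝕜) : E × 𝕜 :=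
  (S p.1 - z • p.1 + p.2 • w, ⟪w, p.1⟫_𝕜)

section Grushin

variable {𝕜 E ι : Type*} [RCLike 𝕜] [NormedAddCommGroup E] [InnerProductSpace 𝕜 E]
  (e : HilbertBasis ι 𝕜 E) {S : E →L[𝕜] E} {lam : ι → 𝕜} {k : ι} {z : 𝕜}

theorem inner_grushinOperator_fst_self (hS : ∀ i, S (e i) = lam i • e i) (p : E × 𝕜) :
    ⟪e k, (grushinOperator S z (e k) p).1⟫_𝕜 = (lam k - z) * ⟪e k, p.1⟫_𝕜 + p.2 := by
  simp [grushinOperator, inner_add_right, inner_sub_right, inner_smul_right,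
    e.inner_apply_of_apply_eq_smul hS, e.orthonormal.norm_eq_one, sub_mul]

theorem inner_grushinOperator_fst_of_ne (hS : ∀ i, S (e i) = lam i • e i) {l : ι} (hl : l ≠ k)
    (p : E × 𝕜) :
    ⟪e l, (grushinOperator S z (e k) p).1⟫_𝕜 = (lam l - z) * ⟪e l, p.1⟫_𝕜 := by
  simp [grushinOperator, inner_add_right, inner_sub_right, inner_smul_right,
    e.inner_apply_of_apply_eq_smul hS, e.orthonormal.inner_eq_zero hl, sub_mul]

theorem grushinOperator_injective (hS : ∀ i, S (e i) = lam i • e i)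
    (hlam : ∀ l, l ≠ k → lam l ≠ z) : Function.Injective (grushinOperator S z (e k)) := by
  intro p q hpq
  have hk : ⟪e k, p.1⟫_𝕜 = ⟪e k, q.1⟫_𝕜 := congrArg Prod.snd hpq
  have hfst := congrArg (fun r => ⟪e k, r.1⟫_𝕜) hpq
  simp only [inner_grushinOperator_fst_self e hS, hk, add_right_inj] at hfst
  refine Prod.ext (e.ext_inner_left fun l => ?_) hfst
  rcases eq_or_ne l k with rfl | hl
  · exact hk
  · have hl' := congrArg (fun r => ⟪e l, r.1⟫_𝕜) hpq
    simp only [inner_grushinOperator_fst_of_ne e hS hl] at hl'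
    exact mul_left_cancel₀ (sub_ne_zero.2 (hlam l hl)) hl'

theorem grushinOperator_apply_of_hasSum (hS : ∀ i, S (e i) = lam i • e i)
    (hlam : ∀ l, l ≠ k → lam l ≠ z) {v s : E}
    (hs : HasSum (fun l : {l // l ≠ k} => ((lam l - z)⁻¹ * ⟪e l, v⟫_𝕜) • e l) s) (vplus : 𝕜) :
    grushinOperator S z (e k) (vplus • e k + s, ⟪e k, v⟫_𝕜 + (z - lam k) * vplus) =
      (v, vplus) := by
  have hsk : ⟪e k, s⟫_𝕜 = 0 := inner_eq_zero_of_hasSum hs fun l => by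
    simp [inner_smul_right, e.orthonormal.inner_eq_zero (Ne.symm l.2)]
  have hsl : ∀ l (hl : l ≠ k), ⟪e l, s⟫_𝕜 = (lam l - z)⁻¹ * ⟪e l, v⟫_𝕜 := fun l hl =>
    (e.orthonormal.comp _ Subtype.val_injective).inner_eq_of_hasSum_smul hs ⟨l, hl⟩
  refine Prod.ext (e.ext_inner_left fun l => ?_) ?_
  · rcases eq_or_ne l k with rfl | hl
    · simp only [inner_grushinOperator_fst_self e hS, inner_add_right, inner_smul_right,
        inner_self_eq_norm_sq_to_K, e.orthonormal.norm_eq_one, map_one, one_pow, mul_one, hsk,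
        add_zero]
      ring
    · simp [inner_grushinOperator_fst_of_ne e hS hl, inner_add_right, inner_smul_right,
        e.orthonormal.inner_eq_zero hl, hsl l hl, sub_ne_zero.2 (hlam l hl)]
  · simp [grushinOperator, inner_add_right, inner_smul_right, hsk, e.orthonormal.norm_eq_one]

end Grushin

theorem grushin_problem_bijective_general
    {H : Type*} [NormedAddCommGroup H] [InnerProductSpace ℂ H] [CompleteSpace H]
    (e : HilbertBasis ℤ ℂ H) (lam : ℤ → ℂ)
    (S : H →L[ℂ] H) (hS : ∀ k : ℤ, S (e k) = lam k • e k)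
    (k : ℤ) (z : ℂ) (δ : ℝ) (hδ : 0 < δ)
    (hgap : ∀ l : ℤ, l ≠ k → δ ≤ ‖z - lam l‖)
    (𝒮 : H × ℂ → H × ℂ)
    (h𝒮 : ∀ p : H × ℂ,
      𝒮 p = (S p.1 - z • p.1 + p.2 • e k, (inner ℂ (e k) p.1 : ℂ))) :
    Function.Bijective 𝒮 ∧
    ∀ (v : H) (vplus : ℂ), ∃ s : H,
      HasSum (fun l : {l : ℤ // l ≠ k} =>
        ((lam l.1 - z)⁻¹ * (inner ℂ (e l.1) v : ℂ)) • e l.1) s ∧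
      𝒮 (vplus • e k + s, (inner ℂ (e k) v : ℂ) + (z - lam k) * vplus) = (v, vplus) := by
  obtain rfl : 𝒮 = grushinOperator S z (e k) := funext h𝒮
  have hlam : ∀ l, l ≠ k → lam l ≠ z := fun l hl h => by
    simpa [h, hδ.not_ge] using hgap l hl
  have hinv : ∀ l : {l // l ≠ k}, ‖(lam l - z)⁻¹‖ ≤ δ⁻¹ := fun l => by
    rw [norm_inv, norm_sub_rev]
    exact inv_anti₀ hδ (hgap l l.2)
  have hsolve : ∀ (v : H) (vplus : ℂ), ∃ s : H,
      HasSum (fun l : {l : ℤ // l ≠ k} => ((lam l - z)⁻¹ * ⟪e l, v⟫_ℂ) • e l) s ∧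
      grushinOperator S z (e k) (vplus • e k + s, ⟪e k, v⟫_ℂ + (z - lam k) * vplus) =
        (v, vplus) := fun v vplus =>
    have ⟨s, hs⟩ := (e.orthonormal.comp _ Subtype.val_injective).summable_mul_inner_smul hinv v
    ⟨s, hs, grushinOperator_apply_of_hasSum e hS hlam hs vplus⟩
  refine ⟨⟨grushinOperator_injective e hS hlam, fun p => ?_⟩, hsolve⟩
  obtain ⟨s, -, hs⟩ := hsolve p.1 p.2
  exact ⟨_, hs⟩

/-- With `S` diagonal in the Hilbert basis `(e_k)_{k∈ℤ}`
(`S e_k = λ_k e_k`, `λ` bounded), `k ∈ ℤ`, `z ∈ ℂ`, and `δ > 0` with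
`|z − λ_l| ≥ δ` for all `l ≠ k`, the Grushin operator
`𝒮(u, u₋) = ((S − z)u + u₋ e_k, ⟨e_k, u⟩)` is a bijection of `H × ℂ`, whose inverse
sends `(v, vplus)` to `(u, u₋)` with `u = vplus e_k + Σ_{l≠k} (λ_l − z)⁻¹ ⟨e_l, v⟩ e_l`
(the series converging in `H`) and `u₋ = ⟨e_k, v⟩ + (z − λ_k) vplus`; in particular the
effective Hamiltonian is `E₋₊(z) = z − λ_k`. -/
theorem grushin_problem_bijective
    {H : Type*} [NormedAddCommGroup H] [InnerProductSpace ℂ H] [CompleteSpace H]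
    (e : HilbertBasis ℤ ℂ H) (lam : ℤ → ℂ)
    (hbdd : ∃ M : ℝ, ∀ k : ℤ, ‖lam k‖ ≤ M)
    (S : H →L[ℂ] H) (hS : ∀ k : ℤ, S (e k) = lam k • e k)
    (k : ℤ) (z : ℂ) (δ : ℝ) (hδ : 0 < δ)
    (hgap : ∀ l : ℤ, l ≠ k → δ ≤ ‖z - lam l‖)
    (𝒮 : H × ℂ → H × ℂ)
    (h𝒮 : ∀ p : H × ℂ,
      𝒮 p = (S p.1 - z • p.1 + p.2 • e k, (inner ℂ (e k) p.1 : ℂ))) :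
    Function.Bijective 𝒮 ∧
    ∀ (v : H) (vplus : ℂ), ∃ s : H,
      HasSum (fun l : {l : ℤ // l ≠ k} =>
        ((lam l.1 - z)⁻¹ * (inner ℂ (e l.1) v : ℂ)) • e l.1) s ∧
      𝒮 (vplus • e k + s, (inner ℂ (e k) v : ℂ) + (z - lam k) * vplus) = (v, vplus) :=
  grushin_problem_bijective_general e lam S hS k z δ hδ hgap 𝒮 h𝒮
end

section
/- Assume in addition that 0 < ħ ≤ 1, δ ≥ ħ/C₀ and |z − λ_k| ≤ C₁ħ for some constants C₀, C₁ > 0. Then there is a constant C > 0 depending only on C₀ and C₁ such that whenever 𝒮(u, u₋) = (v, v₊) with (u, u₋), (v, v₊) ∈ H × ℂ, one has the a priori estimate ħ‖u‖ + |u₋| ≤ C(‖v‖ + ħ|v₊|). -/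
/-!
In the basis `(e_l)`, the equation `(S - z) u + u₋ e_k = v` reads
`⟨e_l, v⟩ = (λ_l - z) ⟨e_l, u⟩ + u₋ δ_{lk}`. The `k`-th coefficient gives
`u₋ = ⟨e_k, v⟩ + (z - λ_k) v₊`, of size `‖v‖ + C₁ ħ |v₊|`; for `l ≠ k` the gap `|z - λ_l| ≥ δ`
bounds the part of `u` orthogonal to `e_k` by `‖v‖ / δ ≤ C₀ ‖v‖ / ħ`.
-/

open scoped InnerProductSpace

namespace HilbertBasis

variable {ι 𝕜 E : Type*} [RCLike 𝕜] [NormedAddCommGroup E] [InnerProductSpace 𝕜 E]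
  (b : HilbertBasis ι 𝕜 E)

theorem hasSum_norm_inner_sq (x : E) : HasSum (fun i => ‖⟪b i, x⟫_𝕜‖ ^ 2) (‖x‖ ^ 2) := by
  simpa [b.repr_apply_apply] using lp.hasSum_norm (p := 2) (by norm_num) (b.repr x)

theorem norm_le_of_norm_inner_le {x y : E} {c : ℝ} (hc : 0 ≤ c)
    (h : ∀ i, ‖⟪b i, x⟫_𝕜‖ ≤ c * ‖⟪b i, y⟫_𝕜‖) : ‖x‖ ≤ c * ‖y‖ := by
  have hsq : ‖x‖ ^ 2 ≤ (c * ‖y‖) ^ 2 := by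
    rw [mul_pow]
    refine hasSum_le (fun i => ?_) (b.hasSum_norm_inner_sq x)
      ((b.hasSum_norm_inner_sq y).mul_left (c ^ 2))
    rw [← mul_pow]
    exact pow_le_pow_left₀ (norm_nonneg _) (h i) 2
  exact (pow_le_pow_iff_left₀ (norm_nonneg _) (by positivity) two_ne_zero).mp hsq

theorem inner_apply_of_apply_eq_smul_s9 {T : E →L[𝕜] E} {μ : ι → 𝕜}
    (hT : ∀ i, T (b i) = μ i • b i) (i : ι) (x : E) :
    ⟪b i, T x⟫_𝕜 = μ i * ⟪b i, x⟫_𝕜 := by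
  classical
  have hsum : HasSum (fun j => ⟪b i, T (b.repr x j • b j)⟫_𝕜) ⟪b i, T x⟫_𝕜 :=
    ((b.hasSum_repr x).mapL T).mapL (innerSL 𝕜 (b i))
  refine hsum.unique ?_
  convert hasSum_ite_eq i (μ i * ⟪b i, x⟫_𝕜) using 2 with j
  rw [map_smul, hT, inner_smul_right, inner_smul_right, b.repr_apply_apply]
  obtain rfl | hji := eq_or_ne j i
  · simp [b.orthonormal.1 j, mul_comm]
  · simp [b.orthonormal.inner_eq_zero hji.symm, hji]

section Grushin

variable {T : E →L[𝕜] E} {μ : ι → 𝕜} (hT : ∀ i, T (b i) = μ i • b i) {k : ι} {z uminus : 𝕜}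
  {u v : E} (huv : T u - z • u + uminus • b k = v)
include hT huv

theorem inner_eq_of_grushin_eq (i : ι) :
    ⟪b i, v⟫_𝕜 = (μ i - z) * ⟪b i, u⟫_𝕜 + uminus * ⟪b i, b k⟫_𝕜 := by
  rw [← huv, inner_add_right, inner_sub_right, inner_smul_right, inner_smul_right,
    b.inner_apply_of_apply_eq_smul_s9 hT]
  ring

theorem norm_minus_le_of_grushin_eq : ‖uminus‖ ≤ ‖v‖ + ‖z - μ k‖ * ‖⟪b k, u⟫_𝕜‖ := by
  have hk := b.inner_eq_of_grushin_eq hT huv k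
  rw [inner_self_eq_norm_sq_to_K, b.orthonormal.1 k, RCLike.ofReal_one, one_pow, mul_one] at hk
  calc ‖uminus‖ = ‖⟪b k, v⟫_𝕜 + (z - μ k) * ⟪b k, u⟫_𝕜‖ := by rw [hk]; congr 1; ring
    _ ≤ ‖v‖ + ‖z - μ k‖ * ‖⟪b k, u⟫_𝕜‖ := by
      grw [norm_add_le, norm_mul, norm_inner_le_norm, b.orthonormal.1 k, one_mul]

theorem norm_le_of_grushin_eq {δ : ℝ} (hδ : 0 < δ) (hgap : ∀ l, l ≠ k → δ ≤ ‖z - μ l‖) :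
    ‖u‖ ≤ δ⁻¹ * ‖v‖ + ‖⟪b k, u⟫_𝕜‖ := by
  set w := u - ⟪b k, u⟫_𝕜 • b k
  have hw : ‖w‖ ≤ δ⁻¹ * ‖v‖ := by
    refine b.norm_le_of_norm_inner_le (inv_nonneg.2 hδ.le) fun l => ?_
    obtain rfl | hlk := eq_or_ne l k
    · simp [w, inner_sub_right, inner_smul_right, inner_self_eq_norm_sq_to_K, b.orthonormal.1 l]
      positivity
    have hl := b.inner_eq_of_grushin_eq hT huv l
    rw [b.orthonormal.inner_eq_zero hlk, mul_zero, add_zero] at hl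
    rw [le_inv_mul_iff₀ hδ, hl, norm_mul, norm_sub_rev]
    simp only [w, inner_sub_right, inner_smul_right, b.orthonormal.inner_eq_zero hlk, mul_zero,
      sub_zero]
    gcongr
    exact hgap l hlk
  calc ‖u‖ = ‖w + ⟪b k, u⟫_𝕜 • b k‖ := by rw [sub_add_cancel]
    _ ≤ δ⁻¹ * ‖v‖ + ‖⟪b k, u⟫_𝕜‖ := by
      grw [norm_add_le, hw, norm_smul, b.orthonormal.1 k, mul_one]

end Grushin

end HilbertBasis

/-- A priori estimate for the Grushin problem: for all constants
`C₀, C₁ > 0` there is a constant `C > 0` (depending only on `C₀` and `C₁`) such that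
for any complex Hilbert space `H` with Hilbert basis `(e_k)_{k∈ℤ}`, any bounded
`λ : ℤ → ℂ`, any bounded operator `S` with `S e_k = λ_k e_k`, any `k ∈ ℤ`, `z ∈ ℂ`,
`δ > 0` with `|z − λ_l| ≥ δ` for `l ≠ k`, and any `0 < ħ ≤ 1` with `δ ≥ ħ/C₀` and
`|z − λ_k| ≤ C₁ħ`: whenever `𝒮(u, u₋) = (v, v₊)` (i.e. `(S − z)u + u₋ e_k = v` and
`⟨e_k, u⟩ = v₊`), one has `ħ‖u‖ + |u₋| ≤ C(‖v‖ + ħ|v₊|)`. -/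
theorem grushin_problem_apriori_estimate
    (C₀ C₁ : ℝ) (hC₀ : 0 < C₀) (hC₁ : 0 < C₁) :
    ∃ C : ℝ, 0 < C ∧
      ∀ (H : Type) (_ : NormedAddCommGroup H), ∀ (_ : InnerProductSpace ℂ H)
        (_ : CompleteSpace H)
        (e : HilbertBasis ℤ ℂ H) (lam : ℤ → ℂ),
        (∃ M : ℝ, ∀ k : ℤ, ‖lam k‖ ≤ M) →
        ∀ (S : H →L[ℂ] H), (∀ k : ℤ, S (e k) = lam k • e k) →
        ∀ (k : ℤ) (z : ℂ) (δ ℏ : ℝ),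
          0 < δ → (∀ l : ℤ, l ≠ k → δ ≤ ‖z - lam l‖) →
          0 < ℏ → ℏ ≤ 1 → ℏ / C₀ ≤ δ → ‖z - lam k‖ ≤ C₁ * ℏ →
          ∀ (u v : H) (uminus vplus : ℂ),
            S u - z • u + uminus • e k = v → (inner ℂ (e k) u : ℂ) = vplus →
            ℏ * ‖u‖ + ‖uminus‖ ≤ C * (‖v‖ + ℏ * ‖vplus‖) := by
  refine ⟨C₀ + C₁ + 1, by positivity, ?_⟩
  intro H _ _ _ e lam _ S hS k z δ ℏ hδ hgap hℏ _ hℏδ hzk u v uminus vplus huv hvplus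
  subst hvplus
  have hu := e.norm_le_of_grushin_eq hS huv hδ hgap
  have hminus := e.norm_minus_le_of_grushin_eq hS huv
  have hℏu : ℏ * ‖u‖ ≤ C₀ * ‖v‖ + ℏ * ‖⟪e k, u⟫_ℂ‖ := by
    have : ℏ * δ⁻¹ ≤ C₀ := by
      rw [← div_eq_mul_inv, div_le_iff₀ hδ]
      rwa [div_le_iff₀ hC₀, mul_comm] at hℏδ
    grw [hu, mul_add, ← mul_assoc, this]
  grw [hzk] at hminus
  nlinarith [norm_nonneg v, norm_nonneg ⟪e k, u⟫_ℂ, mul_nonneg hℏ.le (norm_nonneg ⟪e k, u⟫_ℂ)]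
end
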